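/- arXiv:1902.08682 — 2 statements merged into one kernel-verified Lean document; each statement's English description precedes it below -/
import Mathlib

section
/- Let φ₁, φ₂ be a basis of ℝ² with φ₁ + φ₂ = (α, 0)ᵀ, α ≠ 0, and write φ₂ = (β, γ)ᵀ with γ ≠ 0. Let (d_n) be a sequence of reals with c₁/n ≤ |d_n| ≤ c₂/n for constants 0 < c₁ ≤ c₂. Define Φ̃_{n1}(x) = sin(nx)(φ₁+φ₂) and Φ̃_{n2}(x) = d_n sin(nx) φ₂. Then a pair (u₁, u₂) ∈ L²(0,π) × H¹₀(0,π) admits a unique representation (u₁,u₂) = Σ_n (ã_{n1} Φ̃_{n1} + ã_{n2} Φ̃_{n2}) with (ã_{n1}), (ã_{n2}) ∈ ℓ², and ‖u₁‖²_{L²} + ‖u₂‖²_{H¹} ≍ Σ_{n,j} |ã_{nj}|². In particular {Φ̃_{nj}} is a Riesz basis of the asymmetric space L²(0,π) × H¹₀(0,π). -/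
/-!
Coefficientwise, `(ã_{n1}, ã_{n2}) ↦ (v_n, (n+1) w_n)` is the upper triangular map
`(a, b) ↦ (a α + b d_n β, b (n+1) d_n γ)`. Since `(n+1) |d_n| ∈ [c₁, c₂]`, its entries are
bounded and its diagonal is bounded away from zero uniformly in `n`, so these maps and their
inverses are uniformly bounded. Summing the pointwise estimates over `n` gives both the
`ℓ²` membership of the coefficients and the two-sided norm equivalence.
-/

theorem sq_add_sq_triangular_le {p q r Q R a b : ℝ} (hq : q ^ 2 ≤ Q) (hr : r ^ 2 ≤ R) :
    (a * p + b * q) ^ 2 + (b * r) ^ 2 ≤ (2 * p ^ 2 + 2 * Q + R) * (a ^ 2 + b ^ 2) := by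
  have hQ : 0 ≤ Q := (sq_nonneg q).trans hq
  have hR : 0 ≤ R := (sq_nonneg r).trans hr
  nlinarith [sq_nonneg (a * p - b * q), mul_le_mul_of_nonneg_left hq (sq_nonneg b),
    mul_le_mul_of_nonneg_left hr (sq_nonneg b), mul_nonneg hQ (sq_nonneg a),
    mul_nonneg hR (sq_nonneg a), sq_nonneg (b * p)]

theorem sq_add_sq_le_triangular {p q r Q ρ a b : ℝ} (hp : p ≠ 0) (hq : q ^ 2 ≤ Q)
    (hρ : 0 < ρ) (hr : ρ ≤ r ^ 2) :
    a ^ 2 + b ^ 2 ≤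
      (2 / p ^ 2 + 2 * Q / (p ^ 2 * ρ) + 1 / ρ) * ((a * p + b * q) ^ 2 + (b * r) ^ 2) := by
  set x := a * p + b * q
  set y := b * r
  have hp2 : 0 < p ^ 2 := by positivity
  have hQ : 0 ≤ Q := (sq_nonneg q).trans hq
  have hb : b ^ 2 ≤ y ^ 2 / ρ := by
    rw [le_div_iff₀ hρ, mul_pow]
    exact mul_le_mul_of_nonneg_left hr (sq_nonneg b)
  have ha : a ^ 2 ≤ (2 * x ^ 2 + 2 * Q * (y ^ 2 / ρ)) / p ^ 2 := by
    rw [le_div_iff₀ hp2]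
    nlinarith [sq_nonneg (x + b * q), mul_le_mul_of_nonneg_left hq (sq_nonneg b),
      mul_le_mul_of_nonneg_left hb hQ]
  have hx : 0 ≤ x ^ 2 * (2 * Q / (p ^ 2 * ρ) + 1 / ρ) := by positivity
  have hy : 0 ≤ y ^ 2 * (2 / p ^ 2) := by positivity
  calc a ^ 2 + b ^ 2 ≤ (2 * x ^ 2 + 2 * Q * (y ^ 2 / ρ)) / p ^ 2 + y ^ 2 / ρ := add_le_add ha hb
    _ = 2 / p ^ 2 * x ^ 2 + (2 * Q / (p ^ 2 * ρ) + 1 / ρ) * y ^ 2 := by field_simp; ring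
    _ ≤ _ := by nlinarith

theorem one_le_triangular_bound_mul {p Q ρ R : ℝ} (hp : p ≠ 0) (hQ : 0 ≤ Q) (hρ : 0 < ρ)
    (hR : 0 ≤ R) : 1 ≤ (2 / p ^ 2 + 2 * Q / (p ^ 2 * ρ) + 1 / ρ) * (2 * p ^ 2 + 2 * Q + R) := by
  calc (1 : ℝ) ≤ 2 / p ^ 2 * (2 * p ^ 2) := by field_simp; norm_num
    _ ≤ _ := by
      apply mul_le_mul _ _ (by positivity) (by positivity) <;>
      linarith [show 0 ≤ 2 * Q / (p ^ 2 * ρ) + 1 / ρ by positivity]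

theorem summable_sq_and_tsum_sq_add_le {ι : Type*} {a b x y : ι → ℝ} {C : ℝ}
    (ha : Summable fun i => a i ^ 2) (hb : Summable fun i => b i ^ 2)
    (h : ∀ i, x i ^ 2 + y i ^ 2 ≤ C * (a i ^ 2 + b i ^ 2)) :
    (Summable fun i => x i ^ 2) ∧ (Summable fun i => y i ^ 2) ∧
      ∑' i, x i ^ 2 + ∑' i, y i ^ 2 ≤ C * (∑' i, a i ^ 2 + ∑' i, b i ^ 2) := by
  have hC : Summable fun i => C * (a i ^ 2 + b i ^ 2) := (ha.add hb).mul_left C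
  have hx : Summable fun i => x i ^ 2 :=
    hC.of_nonneg_of_le (fun _ => sq_nonneg _) fun i => by nlinarith [h i, sq_nonneg (y i)]
  have hy : Summable fun i => y i ^ 2 :=
    hC.of_nonneg_of_le (fun _ => sq_nonneg _) fun i => by nlinarith [h i, sq_nonneg (x i)]
  refine ⟨hx, hy, ?_⟩
  rw [← hx.tsum_add hy, ← ha.tsum_add hb, ← tsum_mul_left]
  exact (hx.add hy).tsum_le_tsum h hC

section TriangularSystem

variable {ι : Type*} {p Q R ρ : ℝ} {q r a b x y : ι → ℝ}

theorem tsum_sq_add_le_of_triangular (hq : ∀ i, q i ^ 2 ≤ Q) (hr : ∀ i, r i ^ 2 ≤ R)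
    (ha : Summable fun i => a i ^ 2) (hb : Summable fun i => b i ^ 2)
    (hxy : ∀ i, x i = a i * p + b i * q i ∧ y i = b i * r i) :
    ∑' i, x i ^ 2 + ∑' i, y i ^ 2 ≤ (2 * p ^ 2 + 2 * Q + R) * (∑' i, a i ^ 2 + ∑' i, b i ^ 2) :=
  (summable_sq_and_tsum_sq_add_le ha hb fun i => by
    rw [(hxy i).1, (hxy i).2]; exact sq_add_sq_triangular_le (hq i) (hr i)).2.2

theorem summable_sq_and_tsum_sq_add_le_of_triangular (hp : p ≠ 0) (hq : ∀ i, q i ^ 2 ≤ Q)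
    (hρ : 0 < ρ) (hr : ∀ i, ρ ≤ r i ^ 2)
    (hx : Summable fun i => x i ^ 2) (hy : Summable fun i => y i ^ 2)
    (hxy : ∀ i, x i = a i * p + b i * q i ∧ y i = b i * r i) :
    (Summable fun i => a i ^ 2) ∧ (Summable fun i => b i ^ 2) ∧
      ∑' i, a i ^ 2 + ∑' i, b i ^ 2 ≤
        (2 / p ^ 2 + 2 * Q / (p ^ 2 * ρ) + 1 / ρ) * (∑' i, x i ^ 2 + ∑' i, y i ^ 2) :=
  summable_sq_and_tsum_sq_add_le hx hy fun i => by
    rw [(hxy i).1, (hxy i).2]; exact sq_add_sq_le_triangular hp (hq i) hρ (hr i)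

theorem existsUnique_triangular_of_summable (hp : p ≠ 0) (hq : ∀ i, q i ^ 2 ≤ Q)
    (hρ : 0 < ρ) (hr : ∀ i, ρ ≤ r i ^ 2)
    (hx : Summable fun i => x i ^ 2) (hy : Summable fun i => y i ^ 2) :
    ∃! c : (ι → ℝ) × (ι → ℝ), (Summable fun i => c.1 i ^ 2) ∧ (Summable fun i => c.2 i ^ 2) ∧
      ∀ i, x i = c.1 i * p + c.2 i * q i ∧ y i = c.2 i * r i := by
  have hr0 : ∀ i, r i ≠ 0 := fun i => (pow_ne_zero_iff two_ne_zero).1 (hρ.trans_le (hr i)).ne'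
  set b₀ : ι → ℝ := fun i => y i / r i
  set a₀ : ι → ℝ := fun i => (x i - b₀ i * q i) / p
  have hab : ∀ i, x i = a₀ i * p + b₀ i * q i ∧ y i = b₀ i * r i := fun i =>
    ⟨by simp only [a₀]; field_simp; ring, (div_mul_cancel₀ _ (hr0 i)).symm⟩
  obtain ⟨ha, hb, -⟩ := summable_sq_and_tsum_sq_add_le_of_triangular hp hq hρ hr hx hy hab
  refine ⟨⟨a₀, b₀⟩, ⟨ha, hb, hab⟩, fun c ⟨_, _, hc⟩ => ?_⟩
  have hcb : c.2 = b₀ := funext fun i => eq_div_of_mul_eq (hr0 i) (hc i).2.symm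
  refine Prod.ext (funext fun i => eq_div_of_mul_eq hp ?_) hcb
  rw [(hc i).1, hcb]
  ring

end TriangularSystem

theorem sq_bounds_of_abs_mem_Icc_div {c₁ c₂ N δ : ℝ} (β γ : ℝ) (hN : 1 ≤ N) (hc₁ : 0 ≤ c₁)
    (h₁ : c₁ / N ≤ |δ|) (h₂ : |δ| ≤ c₂ / N) :
    (δ * β) ^ 2 ≤ c₂ ^ 2 * β ^ 2 ∧ c₁ ^ 2 * γ ^ 2 ≤ (N * (δ * γ)) ^ 2 ∧
      (N * (δ * γ)) ^ 2 ≤ c₂ ^ 2 * γ ^ 2 := by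
  have hN0 : 0 < N := one_pos.trans_le hN
  have hNδ : |N * δ| = N * |δ| := by rw [abs_mul, abs_of_pos hN0]
  have hlo : c₁ ≤ |N * δ| := by rw [hNδ]; rwa [div_le_iff₀' hN0] at h₁
  have hhi : |N * δ| ≤ c₂ := by rw [hNδ]; rwa [le_div_iff₀' hN0] at h₂
  have hδ : |δ| ≤ |N * δ| := by rw [hNδ]; exact le_mul_of_one_le_left (abs_nonneg δ) hN
  have hγ : (N * (δ * γ)) ^ 2 = |N * δ| ^ 2 * γ ^ 2 := by rw [sq_abs]; ring
  refine ⟨?_, ?_, ?_⟩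
  · rw [mul_pow, ← sq_abs δ]
    gcongr
    exact hδ.trans hhi
  · rw [hγ]; gcongr
  · rw [hγ]; gcongr

theorem stmt11_general (α β γ : ℝ) (hα : α ≠ 0) (hγ : γ ≠ 0)
    (d : ℕ → ℝ) (c₁ c₂ : ℝ) (hc₁ : 0 < c₁)
    (hd : ∀ n : ℕ, c₁ / (n + 1) ≤ |d n| ∧ |d n| ≤ c₂ / (n + 1)) :
    ∃ m M : ℝ, 0 < m ∧ m ≤ M ∧
      ∀ v w : ℕ → ℝ,
        Summable (fun n => (v n)^2) → Summable (fun n : ℕ => (((n : ℝ) + 1) * w n)^2) →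
        (∃! p : (ℕ → ℝ) × (ℕ → ℝ),
          (Summable fun n => (p.1 n)^2) ∧ (Summable fun n => (p.2 n)^2) ∧
          (∀ n, v n = p.1 n * α + p.2 n * (d n * β) ∧ w n = p.2 n * (d n * γ))) ∧
        ∀ p : (ℕ → ℝ) × (ℕ → ℝ),
          (Summable fun n => (p.1 n)^2) → (Summable fun n => (p.2 n)^2) →
          (∀ n, v n = p.1 n * α + p.2 n * (d n * β) ∧ w n = p.2 n * (d n * γ)) →
          m * ((∑' n, (v n)^2) + ∑' n : ℕ, (((n : ℝ) + 1) * w n)^2) ≤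
              (∑' n, (p.1 n)^2) + (∑' n, (p.2 n)^2) ∧
            (∑' n, (p.1 n)^2) + (∑' n, (p.2 n)^2) ≤
              M * ((∑' n, (v n)^2) + ∑' n : ℕ, (((n : ℝ) + 1) * w n)^2) := by
  set r : ℕ → ℝ := fun n => (n + 1) * (d n * γ)
  have hbounds : ∀ n, (d n * β) ^ 2 ≤ c₂ ^ 2 * β ^ 2 ∧
      c₁ ^ 2 * γ ^ 2 ≤ r n ^ 2 ∧ r n ^ 2 ≤ c₂ ^ 2 * γ ^ 2 := fun n =>
    sq_bounds_of_abs_mem_Icc_div β γ (by simp) hc₁.le (hd n).1 (hd n).2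
  have hq (n : ℕ) := (hbounds n).1
  have hr_ge (n : ℕ) := (hbounds n).2.1
  have hr_le (n : ℕ) := (hbounds n).2.2
  have hρ : 0 < c₁ ^ 2 * γ ^ 2 := by positivity
  set K := 2 * α ^ 2 + 2 * (c₂ ^ 2 * β ^ 2) + c₂ ^ 2 * γ ^ 2
  set M := 2 / α ^ 2 + 2 * (c₂ ^ 2 * β ^ 2) / (α ^ 2 * (c₁ ^ 2 * γ ^ 2)) + 1 / (c₁ ^ 2 * γ ^ 2)
  have hK : 0 < K := by positivity
  have hKM : 1 ≤ M * K := one_le_triangular_bound_mul hα (by positivity) hρ (by positivity)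
  refine ⟨1 / K, M, by positivity, (div_le_iff₀ hK).2 hKM, fun v w hv hw => ?_⟩
  have hw_iff : ∀ (b : ℕ → ℝ) n, w n = b n * (d n * γ) ↔ (n + 1) * w n = b n * r n := by
    intro b n
    rw [show b n * r n = (n + 1) * (b n * (d n * γ)) by ring, mul_right_inj' (by positivity)]
  simp only [hw_iff]
  refine ⟨existsUnique_triangular_of_summable hα hq hρ hr_ge hv hw,
    fun c hca hcb hc => ⟨?_, (summable_sq_and_tsum_sq_add_le_of_triangular hα hq hρ hr_ge
      hv hw hc).2.2⟩⟩
  rw [one_div_mul_eq_div, div_le_iff₀' hK]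
  exact tsum_sq_add_le_of_triangular hq hr_le hca hcb hc

/-- with `φ₁ + φ₂ = (α,0)ᵀ`, `α ≠ 0`, `φ₂ = (β,γ)ᵀ`, `γ ≠ 0`, and
`c₁/n ≤ |d_n| ≤ c₂/n`, every pair `(u₁,u₂) ∈ L²(0,π) × H¹₀(0,π)` — described by its
sine coefficients `v n` (of `u₁`) and `w n` (of `u₂`) for the frequency `n+1`, with
`(v n) ∈ ℓ²` and `((n+1) w n) ∈ ℓ²` — has a unique representation
`(u₁,u₂) = Σ_n (ã_{n1} Φ̃_{n1} + ã_{n2} Φ̃_{n2})` with `ℓ²` coefficients, where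
`Φ̃_{n1} = sin(nx)(φ₁+φ₂)` and `Φ̃_{n2} = d_n sin(nx) φ₂`, i.e. coefficientwise
`v n = ã_{n1} α + ã_{n2} d_n β`, `w n = ã_{n2} d_n γ`; moreover
`‖u₁‖²_{L²} + ‖u₂‖²_{H¹} ≍ Σ |ã_{nj}|²`: `{Φ̃_{nj}}` is a Riesz basis of the
asymmetric space `L²(0,π) × H¹₀(0,π)`. -/
theorem stmt11 (α β γ : ℝ) (hα : α ≠ 0) (hγ : γ ≠ 0)
    (φ₁ φ₂ : Fin 2 → ℝ) (hind : LinearIndependent ℝ ![φ₁, φ₂])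
    (hsum : φ₁ + φ₂ = ![α, 0]) (hφ₂ : φ₂ = ![β, γ])
    (d : ℕ → ℝ) (c₁ c₂ : ℝ) (hc₁ : 0 < c₁) (hc : c₁ ≤ c₂)
    (hd : ∀ n : ℕ, c₁ / (n + 1) ≤ |d n| ∧ |d n| ≤ c₂ / (n + 1)) :
    ∃ m M : ℝ, 0 < m ∧ m ≤ M ∧
      ∀ v w : ℕ → ℝ,
        Summable (fun n => (v n)^2) → Summable (fun n : ℕ => (((n : ℝ) + 1) * w n)^2) →
        (∃! p : (ℕ → ℝ) × (ℕ → ℝ),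
          (Summable fun n => (p.1 n)^2) ∧ (Summable fun n => (p.2 n)^2) ∧
          (∀ n, v n = p.1 n * α + p.2 n * (d n * β) ∧ w n = p.2 n * (d n * γ))) ∧
        ∀ p : (ℕ → ℝ) × (ℕ → ℝ),
          (Summable fun n => (p.1 n)^2) → (Summable fun n => (p.2 n)^2) →
          (∀ n, v n = p.1 n * α + p.2 n * (d n * β) ∧ w n = p.2 n * (d n * γ)) →
          m * ((∑' n, (v n)^2) + ∑' n : ℕ, (((n : ℝ) + 1) * w n)^2) ≤
              (∑' n, (p.1 n)^2) + (∑' n, (p.2 n)^2) ∧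
            (∑' n, (p.1 n)^2) + (∑' n, (p.2 n)^2) ≤
              M * ((∑' n, (v n)^2) + ∑' n : ℕ, (((n : ℝ) + 1) * w n)^2) :=
  stmt11_general α β γ hα hγ d c₁ c₂ hc₁ hd
end

section
/- Let H be a Hilbert space and {e_k}_{k∈K} a family that splits as E₀ ∪ E₁ where E₁ is infinite and every element of E₁ lies in the closed linear span of E₀. Then the set of sequences {((f, e_k))_{k∈K} : f ∈ H} ∩ ℓ²(K) has infinite codimension in ℓ²(K), in the sense that there is an infinite linearly independent family of ℓ² sequences not attained as moment sequences. -/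
/-!
Moments over `E₀` determine the moments over `E₁`: if `(f, e_k) = 0` for every `k ∈ K₀`, then
`f` is orthogonal to the closed span of `E₀`, hence to every `e_k` with `k ∈ K₁`. So no indicator
sequence of a point of `K₁` is a moment sequence, and `K₁` being infinite provides infinitely many
of them, linearly independent and in `ℓ²(K)`.
-/

section

variable {𝕜 E : Type*} [RCLike 𝕜] [NormedAddCommGroup E] [InnerProductSpace 𝕜 E]

theorem inner_eq_zero_of_mem_closure_span {s : Set E} {f x : E}
    (hf : ∀ v ∈ s, inner 𝕜 f v = 0) (hx : x ∈ closure (Submodule.span 𝕜 s : Set E)) :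
    inner 𝕜 f x = 0 := by
  have hker : Submodule.span 𝕜 s ≤ LinearMap.ker (innerₛₗ 𝕜 f) := Submodule.span_le.mpr hf
  exact closure_minimal hker (isClosed_eq (continuous_const.inner continuous_id) continuous_const) hx

theorem not_exists_inner_eq_single {K : Type*} [DecidableEq K] {e : K → E} {K₀ : Set K} {i : K}
    (hi : i ∉ K₀) (hspan : e i ∈ closure (Submodule.span 𝕜 (e '' K₀) : Set E)) :
    ¬ ∃ f : E, ∀ k, inner 𝕜 f (e k) = (Pi.single i 1 : K → 𝕜) k := by
  rintro ⟨f, hf⟩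
  have hK₀ : ∀ v ∈ e '' K₀, inner 𝕜 f v = 0 := by
    rintro _ ⟨k, hk, rfl⟩
    rw [hf, Pi.single_eq_of_ne (ne_of_mem_of_not_mem hk hi)]
  have hi_zero := inner_eq_zero_of_mem_closure_span hK₀ hspan
  rw [hf, Pi.single_eq_same] at hi_zero
  exact one_ne_zero hi_zero

theorem summable_norm_sq_single {K : Type*} [DecidableEq K] (i : K) :
    Summable fun k => ‖(Pi.single i 1 : K → 𝕜) k‖ ^ 2 :=
  summable_of_ne_finset_zero (s := {i}) fun k hk => by
    rw [Pi.single_eq_of_ne (Finset.notMem_singleton.mp hk)]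
    simp

end

theorem stmt19_general {H : Type*} [NormedAddCommGroup H] [InnerProductSpace ℂ H]
    {K : Type*} (e : K → H) (K₀ K₁ : Set K)
    (hdisj : Disjoint K₀ K₁) (hinf : K₁.Infinite)
    (hspan : ∀ k ∈ K₁, e k ∈ closure (Submodule.span ℂ (e '' K₀) : Set H)) :
    ∃ g : ℕ → (K → ℂ), LinearIndependent ℂ g ∧
      ∀ n, (Summable fun k => ‖g n k‖^2) ∧
        ¬ ∃ f : H, ∀ k, (inner ℂ f (e k) : ℂ) = g n k := by
  classical
  let c := hinf.natEmbedding K₁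
  refine ⟨fun n => Pi.single (c n : K) 1, ?_, fun n => ⟨summable_norm_sq_single _, ?_⟩⟩
  · exact (Pi.linearIndependent_single_one K ℂ).comp _ (Subtype.val_injective.comp c.injective)
  · exact not_exists_inner_eq_single (Set.disjoint_right.mp hdisj (c n).2) (hspan _ (c n).2)

/-- if a family `{e_k}` in a Hilbert space splits as `E₀ ∪ E₁` with
`E₁` infinite, each element indexed by `E₁` lying in the closed span of the `E₀`
part, and the `E₀` part a Riesz sequence, then the attained moment sequences have
infinite codimension in `ℓ²(K)`: there is an infinite linearly independent family
of `ℓ²` sequences none of which is a moment sequence `((f, e_k))_k`. -/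
theorem stmt19 {H : Type*} [NormedAddCommGroup H] [InnerProductSpace ℂ H]
    [CompleteSpace H] {K : Type*} (e : K → H) (K₀ K₁ : Set K)
    (hcover : K₀ ∪ K₁ = Set.univ) (hdisj : Disjoint K₀ K₁) (hinf : K₁.Infinite)
    (hspan : ∀ k ∈ K₁, e k ∈ closure (Submodule.span ℂ (e '' K₀) : Set H))
    (hRiesz : ∃ m M : ℝ, 0 < m ∧ ∀ a : K →₀ ℂ, ↑a.support ⊆ K₀ →
      m * ∑ k ∈ a.support, ‖a k‖^2 ≤ ‖∑ k ∈ a.support, a k • e k‖^2 ∧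
      ‖∑ k ∈ a.support, a k • e k‖^2 ≤ M * ∑ k ∈ a.support, ‖a k‖^2) :
    ∃ g : ℕ → (K → ℂ), LinearIndependent ℂ g ∧
      ∀ n, (Summable fun k => ‖g n k‖^2) ∧
        ¬ ∃ f : H, ∀ k, (inner ℂ f (e k) : ℂ) = g n k :=
  stmt19_general e K₀ K₁ hdisj hinf hspan
end
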